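/- Let K be a nowhere-vanishing Killing field on an open set U ⊆ ℝ³ and let f, g : U → ℝ be smooth functions with ⟨K, ∇f⟩ = 0 and ⟨K, ∇g⟩ = 0 on U. Then curl(∇⊥f) = (Δ_K f) K, where Δ_K f = div(∇f/|K|²), and curl(gK) = −∇⊥(|K|² g) + φ g K, where φ = ⟨curl K, K⟩/|K|². -/

import Mathlib

noncomputable section

/-- Vectors in ℝ³. -/
abbrev V3 : Type := Fin 3 → ℝ

/-- Euclidean inner product on ℝ³. -/
def dot3 (u v : V3) : ℝ := ∑ i, u i * v i

/-- Cross product on ℝ³. -/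
def cross3 (u v : V3) : V3 :=
  ![u 1 * v 2 - u 2 * v 1, u 2 * v 0 - u 0 * v 2, u 0 * v 1 - u 1 * v 0]

/-- Partial derivative ∂ᵢ of a scalar function. -/
def pd (i : Fin 3) (f : V3 → ℝ) (x : V3) : ℝ := fderiv ℝ f x (Pi.single i 1)

/-- Gradient of a scalar function. -/
def grad3 (f : V3 → ℝ) (x : V3) : V3 := fun i => pd i f x

/-- Divergence of a vector field. -/
def div3 (X : V3 → V3) (x : V3) : ℝ := ∑ i, fderiv ℝ X x (Pi.single i 1) i

/-- Curl of a vector field. -/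
def curl3 (X : V3 → V3) (x : V3) : V3 :=
  ![pd 1 (fun y => X y 2) x - pd 2 (fun y => X y 1) x,
    pd 2 (fun y => X y 0) x - pd 0 (fun y => X y 2) x,
    pd 0 (fun y => X y 1) x - pd 1 (fun y => X y 0) x]

/-- Lie bracket of vector fields: [X,Y](x) = DY(x)X(x) − DX(x)Y(x). -/
def bracket3 (X Y : V3 → V3) (x : V3) : V3 := fderiv ℝ Y x (X x) - fderiv ℝ X x (Y x)

/-- `K` is a Killing field of the Euclidean metric on `U`: `DK(x)` is antisymmetric on `U`. -/
def IsKillingOn (K : V3 → V3) (U : Set V3) : Prop :=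
  ∀ x ∈ U, ∀ v w : V3, dot3 (fderiv ℝ K x v) w + dot3 v (fderiv ℝ K x w) = 0

/-- Skew gradient ∇⊥h = (K × ∇h)/|K|². -/
def skewGrad (K : V3 → V3) (h : V3 → ℝ) (x : V3) : V3 :=
  (dot3 (K x) (K x))⁻¹ • cross3 (K x) (grad3 h x)

/-- Poisson bracket {f,g} = ⟨∇⊥f, ∇g⟩. -/
def pbracket (K : V3 → V3) (f g : V3 → ℝ) (x : V3) : ℝ :=
  dot3 (skewGrad K f x) (grad3 g x)

/-- The K-Laplacian Δ_K f = div(∇f/|K|²). -/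
def lapK (K : V3 → V3) (f : V3 → ℝ) (x : V3) : ℝ :=
  div3 (fun y => (dot3 (K y) (K y))⁻¹ • grad3 f y) x

/-- φ = ⟨curl K, K⟩/|K|². -/
def phiK (K : V3 → V3) (x : V3) : ℝ := dot3 (curl3 K x) (K x) / dot3 (K x) (K x)

/-!
Put `w = |K|⁻²`, so that `∇⊥f = w • (K × ∇f)`. Since `DK` is antisymmetric, `div K = 0`,
`DK v = ½ curl K × v`, and hence `∇|K|² = K × curl K` is orthogonal to `K`, and so is `∇w`.
Differentiating `⟨K, ∇f⟩ = 0` and using the symmetry of the Hessian of `f` gives `[K, ∇f] = 0`,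
so `curl (K × ∇f) = (div ∇f) K`; with `⟨∇w, K⟩ = 0` the product rule then yields
`curl (w • (K × ∇f)) = (⟨∇w, ∇f⟩ + w div ∇f) K = div (w ∇f) K`.
The second identity is `curl (gK) = ∇g × K + g curl K`, after expanding
`K × ∇(|K|² g) = |K|² K × ∇g + g K × (K × curl K)` by the triple product formula.
-/

open Matrix Filter Topology

lemma cross3_eq_crossProduct (u v : V3) : cross3 u v = u ⨯₃ v := by
  rw [cross_apply]; rfl

lemma dot3_eq_dotProduct (u v : V3) : dot3 u v = u ⬝ᵥ v := rfl

section Calculus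

variable {D : Type*} [NormedAddCommGroup D] [NormedSpace ℝ D] {x : D}

section Bilinear

variable {E F G : Type*} [NormedAddCommGroup E] [NormedSpace ℝ E] [FiniteDimensional ℝ E]
  [NormedAddCommGroup F] [NormedSpace ℝ F] [FiniteDimensional ℝ F]
  [NormedAddCommGroup G] [NormedSpace ℝ G]

lemma fderiv_bilinear_apply (B : E →ₗ[ℝ] F →ₗ[ℝ] G) {X : D → E} {Y : D → F}
    (hX : DifferentiableAt ℝ X x) (hY : DifferentiableAt ℝ Y x) (v : D) :
    fderiv ℝ (fun y => B (X y) (Y y)) x v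
      = B (fderiv ℝ X x v) (Y x) + B (X x) (fderiv ℝ Y x v) := by
  have h := B.toContinuousBilinearMap.fderiv_of_bilinear hX hY
  simp only [LinearMap.toContinuousBilinearMap_apply] at h
  simp only [h, _root_.add_apply, ContinuousLinearMap.precompR_apply,
    ContinuousLinearMap.precompL_apply, ContinuousLinearMap.compL_apply,
    ContinuousLinearMap.comp_apply, LinearMap.toContinuousBilinearMap_apply, add_comm]

lemma differentiableAt_bilinear (B : E →ₗ[ℝ] F →ₗ[ℝ] G) {X : D → E} {Y : D → F}
    (hX : DifferentiableAt ℝ X x) (hY : DifferentiableAt ℝ Y x) :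
    DifferentiableAt ℝ (fun y => B (X y) (Y y)) x :=
  (B.toContinuousBilinearMap.hasFDerivAt_of_bilinear hX.hasFDerivAt hY.hasFDerivAt).differentiableAt

end Bilinear

lemma fderiv_cross_apply {X Y : D → V3}
    (hX : DifferentiableAt ℝ X x) (hY : DifferentiableAt ℝ Y x) (v : D) :
    fderiv ℝ (fun y => X y ⨯₃ Y y) x v = fderiv ℝ X x v ⨯₃ Y x + X x ⨯₃ fderiv ℝ Y x v :=
  fderiv_bilinear_apply crossProduct hX hY v

lemma fderiv_dotProduct_apply {X Y : D → V3}
    (hX : DifferentiableAt ℝ X x) (hY : DifferentiableAt ℝ Y x) (v : D) :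
    fderiv ℝ (fun y => X y ⬝ᵥ Y y) x v = fderiv ℝ X x v ⬝ᵥ Y x + X x ⬝ᵥ fderiv ℝ Y x v :=
  fderiv_bilinear_apply (dotProductBilin ℝ ℝ) hX hY v

lemma apply_eq_sum_single {ι E : Type*} [Fintype ι] [DecidableEq ι]
    [NormedAddCommGroup E] [NormedSpace ℝ E] (L : (ι → ℝ) →L[ℝ] E) (v : ι → ℝ) :
    L v = ∑ i, v i • L (Pi.single i 1) := by
  conv_lhs => rw [← Finset.univ_sum_single v]
  simp only [map_sum, ← map_smul, ← Pi.single_smul', smul_eq_mul, mul_one]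

lemma dotProduct_single_apply {ι : Type*} [Fintype ι] [DecidableEq ι]
    (L : (ι → ℝ) →L[ℝ] ℝ) (v : ι → ℝ) :
    (fun i => L (Pi.single i 1)) ⬝ᵥ v = L v := by
  rw [apply_eq_sum_single L v, dotProduct]
  simp [mul_comm]

lemma fderiv_component {ι : Type*} [Fintype ι] {X : D → ι → ℝ} (hX : DifferentiableAt ℝ X x)
    (v : D) (j : ι) :
    fderiv ℝ (fun y => X y j) x v = fderiv ℝ X x v j := by
  rw [fderiv_apply hX]; rfl

lemma pd_component {X : V3 → V3} {x : V3} (hX : DifferentiableAt ℝ X x) (i j : Fin 3) :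
    pd i (fun y => X y j) x = fderiv ℝ X x (Pi.single i 1) j :=
  fderiv_component hX _ j

end Calculus

section VectorCalculus

variable {x : V3} {X Y : V3 → V3} {h k : V3 → ℝ}

lemma curl3_eq_of_differentiableAt (hX : DifferentiableAt ℝ X x) :
    curl3 X x = ![fderiv ℝ X x (Pi.single 1 1) 2 - fderiv ℝ X x (Pi.single 2 1) 1,
      fderiv ℝ X x (Pi.single 2 1) 0 - fderiv ℝ X x (Pi.single 0 1) 2,
      fderiv ℝ X x (Pi.single 0 1) 1 - fderiv ℝ X x (Pi.single 1 1) 0] := by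
  simp only [curl3, pd_component hX]

lemma grad3_mul (hh : DifferentiableAt ℝ h x) (hk : DifferentiableAt ℝ k x) :
    grad3 (fun y => h y * k y) x = h x • grad3 k x + k x • grad3 h x := by
  ext i
  simp [grad3, pd, fderiv_fun_mul hh hk]

lemma grad3_inv (hh : DifferentiableAt ℝ h x) (hx : h x ≠ 0) :
    grad3 (fun y => (h y)⁻¹) x = -(h x ^ 2)⁻¹ • grad3 h x := by
  ext i
  have hcomp : (fun y => (h y)⁻¹) = (fun t : ℝ => t⁻¹) ∘ h := rfl
  simp [grad3, pd, hcomp, fderiv_comp x (differentiableAt_inv hx) hh, fderiv_inv, mul_comm]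

lemma div3_smul (hh : DifferentiableAt ℝ h x) (hX : DifferentiableAt ℝ X x) :
    div3 (fun y => h y • X y) x = grad3 h x ⬝ᵥ X x + h x * div3 X x := by
  simp only [div3, grad3, pd, dotProduct, fderiv_fun_smul hh hX, _root_.add_apply,
    _root_.smul_apply, ContinuousLinearMap.smulRight_apply, Pi.add_apply, Pi.smul_apply,
    smul_eq_mul, Fin.sum_univ_three]
  ring

lemma curl3_smul (hh : DifferentiableAt ℝ h x) (hX : DifferentiableAt ℝ X x) :
    curl3 (fun y => h y • X y) x = grad3 h x ⨯₃ X x + h x • curl3 X x := by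
  rw [curl3_eq_of_differentiableAt (hh.fun_smul hX), curl3_eq_of_differentiableAt hX]
  ext i
  fin_cases i <;>
  · simp only [grad3, pd, fderiv_fun_smul hh hX, _root_.add_apply, _root_.smul_apply,
      ContinuousLinearMap.smulRight_apply, cross_apply, Pi.add_apply, Pi.smul_apply, smul_eq_mul,
      smul_cons, smul_empty, Fin.isValue, Fin.zero_eta, Fin.mk_one, Fin.reduceFinMk, cons_val,
      cons_val_zero, cons_val_one]
    ring

lemma curl3_cross (hX : DifferentiableAt ℝ X x) (hY : DifferentiableAt ℝ Y x) :
    curl3 (fun y => X y ⨯₃ Y y) x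
      = div3 Y x • X x - div3 X x • Y x - bracket3 X Y x := by
  rw [curl3_eq_of_differentiableAt (differentiableAt_bilinear crossProduct hX hY), bracket3,
    apply_eq_sum_single (fderiv ℝ Y x), apply_eq_sum_single (fderiv ℝ X x)]
  ext i
  fin_cases i <;>
  · simp only [fderiv_cross_apply hX hY]
    simp only [div3, cross_apply, Fin.sum_univ_three, Pi.add_apply,
      Pi.sub_apply, Pi.smul_apply, smul_eq_mul, Fin.isValue, Fin.zero_eta, Fin.mk_one,
      Fin.reduceFinMk, cons_val, cons_val_zero, cons_val_one]
    ring

lemma cross_curl3_eq_sub (hX : DifferentiableAt ℝ X x) (v : V3) :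
    curl3 X x ⨯₃ v = fderiv ℝ X x v - fun j => fderiv ℝ X x (Pi.single j 1) ⬝ᵥ v := by
  rw [curl3_eq_of_differentiableAt hX, apply_eq_sum_single (fderiv ℝ X x) v]
  ext i
  fin_cases i <;>
  · simp only [cross_apply, dotProduct, Fin.sum_univ_three, Pi.add_apply, Pi.sub_apply,
      Pi.smul_apply, smul_eq_mul, Fin.isValue, Fin.zero_eta, Fin.mk_one, Fin.reduceFinMk, cons_val,
      cons_val_zero, cons_val_one]
    ring

end VectorCalculus

section SecondDerivative

variable {x : V3} {f : V3 → ℝ}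

lemma differentiableAt_grad3 (hf : DifferentiableAt ℝ (fderiv ℝ f) x) :
    DifferentiableAt ℝ (grad3 f) x :=
  differentiableAt_pi.2 fun _ => hf.clm_apply (differentiableAt_const _)

lemma fderiv_grad3_dotProduct (hf : DifferentiableAt ℝ (fderiv ℝ f) x) (u w : V3) :
    fderiv ℝ (grad3 f) x u ⬝ᵥ w = fderiv ℝ (fderiv ℝ f) x u w := by
  rw [← dotProduct_single_apply (fderiv ℝ (fderiv ℝ f) x u) w]
  congr 1
  ext i
  rw [← fderiv_component (differentiableAt_grad3 hf)]
  simp [grad3, pd, fderiv_clm_apply hf (differentiableAt_const _)]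

end SecondDerivative

section Killing

variable {U : Set V3} {K : V3 → V3} {x : V3} {f g : V3 → ℝ}

lemma IsKillingOn.fderiv_dotProduct (hK : IsKillingOn K U) (hx : x ∈ U) (v w : V3) :
    fderiv ℝ K x v ⬝ᵥ w = -(v ⬝ᵥ fderiv ℝ K x w) :=
  eq_neg_of_add_eq_zero_left (hK x hx v w)

lemma IsKillingOn.div3_eq_zero (hK : IsKillingOn K U) (hx : x ∈ U) : div3 K x = 0 := by
  have hdiag (i : Fin 3) : fderiv ℝ K x (Pi.single i 1) i = 0 := by
    have h := hK.fderiv_dotProduct hx (Pi.single i 1) (Pi.single i 1)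
    rw [dotProduct_single, single_dotProduct] at h
    linarith
  simp [div3, hdiag]

lemma IsKillingOn.cross_curl3 (hK : IsKillingOn K U) (hx : x ∈ U)
    (hKd : DifferentiableAt ℝ K x) (v : V3) :
    curl3 K x ⨯₃ v = (2 : ℝ) • fderiv ℝ K x v := by
  rw [cross_curl3_eq_sub hKd]
  ext j
  simp only [hK.fderiv_dotProduct hx, single_dotProduct, one_mul, Pi.sub_apply, sub_neg_eq_add,
    Pi.smul_apply, smul_eq_mul]
  ring

lemma IsKillingOn.grad3_dotProduct_self (hK : IsKillingOn K U) (hx : x ∈ U)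
    (hKd : DifferentiableAt ℝ K x) :
    grad3 (fun y => K y ⬝ᵥ K y) x = K x ⨯₃ curl3 K x := by
  rw [← cross_anticomm, hK.cross_curl3 hx hKd]
  ext i
  simp only [grad3, pd, fderiv_dotProduct_apply hKd hKd, dotProduct_comm (K x),
    hK.fderiv_dotProduct hx, single_dotProduct, one_mul, Pi.neg_apply, Pi.smul_apply, smul_eq_mul]
  ring

lemma IsKillingOn.bracket3_grad3_eq_zero (hK : IsKillingOn K U) (hx : x ∈ U)
    (hKd : DifferentiableAt ℝ K x) (hf : ContDiffAt ℝ 2 f x)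
    (hKf : (fun y => K y ⬝ᵥ grad3 f y) =ᶠ[𝓝 x] fun _ => 0) :
    bracket3 K (grad3 f) x = 0 := by
  have hf' : DifferentiableAt ℝ (fderiv ℝ f) x :=
    (hf.fderiv_right (m := 1) le_rfl).differentiableAt one_ne_zero
  have hsymm : IsSymmSndFDerivAt ℝ f x := hf.isSymmSndFDerivAt (by simp)
  have hconst (v : V3) : fderiv ℝ (fun y => K y ⬝ᵥ grad3 f y) x v = 0 := by
    rw [hKf.fderiv_eq]; simp
  refine dotProduct_self_eq_zero.1 ?_
  calc bracket3 K (grad3 f) x ⬝ᵥ bracket3 K (grad3 f) x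
      = fderiv ℝ (fun y => K y ⬝ᵥ grad3 f y) x (bracket3 K (grad3 f) x) := by
        rw [fderiv_dotProduct_apply hKd (differentiableAt_grad3 hf'), bracket3, sub_dotProduct,
          hK.fderiv_dotProduct hx, fderiv_grad3_dotProduct hf', dotProduct_comm (K x),
          fderiv_grad3_dotProduct hf', hsymm, dotProduct_comm]
        ring
    _ = 0 := hconst _

lemma IsKillingOn.curl3_skewGrad (hK : IsKillingOn K U) (hx : x ∈ U)
    (hKd : DifferentiableAt ℝ K x) (hK0 : K x ≠ 0) (hf : ContDiffAt ℝ 2 f x)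
    (hKf : (fun y => K y ⬝ᵥ grad3 f y) =ᶠ[𝓝 x] fun _ => 0) :
    curl3 (skewGrad K f) x = lapK K f x • K x := by
  have hf' : DifferentiableAt ℝ (grad3 f) x :=
    differentiableAt_grad3 ((hf.fderiv_right (m := 1) le_rfl).differentiableAt one_ne_zero)
  have hq : DifferentiableAt ℝ (fun y => K y ⬝ᵥ K y) x :=
    differentiableAt_bilinear (dotProductBilin ℝ ℝ) hKd hKd
  have hq0 : K x ⬝ᵥ K x ≠ 0 := dotProduct_self_eq_zero.not.2 hK0
  have hw := hq.fun_inv hq0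
  have hwK : K x ⬝ᵥ grad3 (fun y => (K y ⬝ᵥ K y)⁻¹) x = 0 := by
    rw [grad3_inv hq hq0, hK.grad3_dotProduct_self hx hKd, dotProduct_smul, dot_self_cross,
      smul_zero]
  have hskew : skewGrad K f = fun y => (K y ⬝ᵥ K y)⁻¹ • (K y ⨯₃ grad3 f y) := by
    ext y : 1
    rw [skewGrad, cross3_eq_crossProduct, dot3_eq_dotProduct]
  rw [hskew, curl3_smul hw (differentiableAt_bilinear crossProduct hKd hf'), curl3_cross hKd hf',
    hK.bracket3_grad3_eq_zero hx hKd hf hKf, hK.div3_eq_zero hx, cross_cross_eq_smul_sub_smul',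
    hwK, lapK]
  simp only [dot3_eq_dotProduct]
  rw [div3_smul hw hf']
  module

lemma IsKillingOn.curl3_smul_self (hK : IsKillingOn K U) (hx : x ∈ U)
    (hKd : DifferentiableAt ℝ K x) (hK0 : K x ≠ 0) (hg : DifferentiableAt ℝ g x) :
    curl3 (fun y => g y • K y) x
      = -skewGrad K (fun y => dot3 (K y) (K y) * g y) x + (phiK K x * g x) • K x := by
  have hq : DifferentiableAt ℝ (fun y => K y ⬝ᵥ K y) x :=
    differentiableAt_bilinear (dotProductBilin ℝ ℝ) hKd hKd
  have hq0 : K x ⬝ᵥ K x ≠ 0 := dotProduct_self_eq_zero.not.2 hK0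
  simp only [skewGrad, phiK, cross3_eq_crossProduct, dot3_eq_dotProduct]
  rw [curl3_smul hg hKd, grad3_mul hq hg, hK.grad3_dotProduct_self hx hKd, map_add, map_smul,
    map_smul, cross_cross_eq_smul_sub_smul', dotProduct_comm (curl3 K x),
    ← cross_anticomm (K x) (grad3 g x)]
  ext i
  simp only [Pi.add_apply, Pi.neg_apply, Pi.smul_apply, Pi.sub_apply, smul_eq_mul]
  field_simp
  ring

end Killing

theorem curl_skewGrad_and_curl_gK_general (U : Set V3) (hU : IsOpen U)
    (K : V3 → V3) (hKsmooth : ContDiffOn ℝ (⊤ : ℕ∞) K U)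
    (hKill : IsKillingOn K U) (hKne : ∀ x ∈ U, K x ≠ 0)
    (f g : V3 → ℝ)
    (hf : ContDiffOn ℝ (⊤ : ℕ∞) f U) (hg : ContDiffOn ℝ (⊤ : ℕ∞) g U)
    (hKf : ∀ x ∈ U, dot3 (K x) (grad3 f x) = 0) :
    ∀ x ∈ U,
      curl3 (skewGrad K f) x = lapK K f x • K x ∧
      curl3 (fun y => g y • K y) x
        = - skewGrad K (fun y => dot3 (K y) (K y) * g y) x + (phiK K x * g x) • K x := by
  intro x hx
  have hUx : U ∈ 𝓝 x := hU.mem_nhds hx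
  have hKd : DifferentiableAt ℝ K x := (hKsmooth.contDiffAt hUx).differentiableAt (by simp)
  have hf2 : ContDiffAt ℝ 2 f x := (hf.contDiffAt hUx).of_le (WithTop.coe_le_coe.2 le_top)
  exact ⟨hKill.curl3_skewGrad hx hKd (hKne x hx) hf2 (eventually_of_mem hUx hKf),
    hKill.curl3_smul_self hx hKd (hKne x hx) ((hg.contDiffAt hUx).differentiableAt (by simp))⟩

/-- for a nowhere-vanishing Killing field K on an open set U and smooth
functions f, g with K(f) = K(g) = 0, one has curl(∇⊥f) = (Δ_K f) K with
Δ_K f = div(∇f/|K|²), and curl(gK) = −∇⊥(|K|² g) + φ g K with φ = ⟨curl K, K⟩/|K|². -/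
theorem curl_skewGrad_and_curl_gK (U : Set V3) (hU : IsOpen U)
    (K : V3 → V3) (hKsmooth : ContDiffOn ℝ (⊤ : ℕ∞) K U)
    (hKill : IsKillingOn K U) (hKne : ∀ x ∈ U, K x ≠ 0)
    (f g : V3 → ℝ)
    (hf : ContDiffOn ℝ (⊤ : ℕ∞) f U) (hg : ContDiffOn ℝ (⊤ : ℕ∞) g U)
    (hKf : ∀ x ∈ U, dot3 (K x) (grad3 f x) = 0)
    (hKg : ∀ x ∈ U, dot3 (K x) (grad3 g x) = 0) :
    ∀ x ∈ U,
      curl3 (skewGrad K f) x = lapK K f x • K x ∧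
      curl3 (fun y => g y • K y) x
        = - skewGrad K (fun y => dot3 (K y) (K y) * g y) x + (phiK K x * g x) • K x :=
  curl_skewGrad_and_curl_gK_general U hU K hKsmooth hKill hKne f g hf hg hKf
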